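/- For all n > 0, J(n+1) = n + J(n−1) + sum over k from 3 to n of (2k−5)·J(n+1−k), where J is the Jacobsthal sequence. -/
import Mathlib

def J : ℕ → ℕ
  | 0 => 0
  | 1 => 1
  | n + 2 => J (n + 1) + 2 * J n

noncomputable def Sz (m : ℕ) : ℤ :=
  ∑ k ∈ Finset.Icc 3 (m + 1), (2 * (k : ℤ) - 5) * J (m + 2 - k)

lemma Sz_rec (m : ℕ) : Sz (m + 2) = Sz (m + 1) + 2 * Sz m + (2 * m + 1) := by
  match m with
  | 0 =>
    simp [Sz, Finset.Icc_self, show Finset.Icc 3 1 = ∅ by decide,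
      show Finset.Icc 3 2 = ∅ by decide]
    norm_num [J]
  | Nat.succ m =>
    have j1 : (J 1 : ℤ) = 1 := by norm_num [J]
    have j2 : (J 2 : ℤ) = 1 := by norm_num [J]
    have e1 : m + 1 + 2 + 2 - (m + 1 + 2 + 1) = 1 := by omega
    have e2 : m + 1 + 2 + 2 - (m + 1 + 1 + 1) = 2 := by omega
    have h1 : Sz (m + 3) = (∑ k ∈ Finset.Icc 3 (m + 2), (2 * (k : ℤ) - 5) * J (m + 5 - k))
        + (2 * ((m:ℤ)+3) - 5) * J 2 + (2 * ((m:ℤ)+4) - 5) * J 1 := by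
      rw [Sz, show m + 3 + 1 = (m+1+2)+1 from rfl, Finset.sum_Icc_succ_top (by omega),
        show m + 1 + 2 = (m+1+1)+1 from rfl, Finset.sum_Icc_succ_top (by omega)]
      rw [e1, e2]
      push_cast
      ring
    have h2 : ∀ k ∈ Finset.Icc 3 (m + 2), (2 * (k:ℤ) - 5) * J (m + 5 - k)
        = (2 * (k:ℤ) - 5) * J (m + 4 - k) + 2 * ((2 * (k:ℤ) - 5) * J (m + 3 - k)) := by
      intro k hk
      simp only [Finset.mem_Icc] at hk
      have h3 : m + 5 - k = (m + 3 - k) + 2 := by omega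
      have h4 : m + 3 - k + 1 = m + 4 - k := by omega
      rw [h3, J, h4]
      push_cast
      ring
    have h5 : (∑ k ∈ Finset.Icc 3 (m + 2), (2 * (k : ℤ) - 5) * J (m + 5 - k))
        = (∑ k ∈ Finset.Icc 3 (m + 2), (2 * (k : ℤ) - 5) * J (m + 4 - k))
          + 2 * (∑ k ∈ Finset.Icc 3 (m + 2), (2 * (k : ℤ) - 5) * J (m + 3 - k)) := by
      rw [Finset.sum_congr rfl h2, Finset.sum_add_distrib, Finset.mul_sum]
    have e3 : m + 2 + 2 - (m + 2 + 1) = 1 := by omega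
    have h6 : Sz (m + 2) = (∑ k ∈ Finset.Icc 3 (m + 2), (2 * (k : ℤ) - 5) * J (m + 4 - k))
        + (2 * ((m:ℤ)+3) - 5) * J 1 := by
      rw [Sz, show m + 2 + 1 = (m+2)+1 from rfl, Finset.sum_Icc_succ_top (by omega), e3]
      rw [Finset.sum_congr rfl (fun k _ => rfl :
        ∀ k ∈ Finset.Icc 3 (m + 2), (2 * (k : ℤ) - 5) * J (m + 2 + 2 - k)
          = (2 * (k : ℤ) - 5) * J (m + 4 - k))]
      push_cast
      ring
    have h7 : Sz (m + 1) = ∑ k ∈ Finset.Icc 3 (m + 2), (2 * (k : ℤ) - 5) * J (m + 3 - k) := by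
      rfl
    show Sz (m + 3) = Sz (m + 2) + 2 * Sz (m + 1) + (2 * ((m:ℤ) + 1) + 1)
    rw [h1, h5, h6, h7, j1, j2]
    ring

lemma Zmain (m : ℕ) : (J (m + 2) : ℤ) = (m + 1) + J m + Sz m := by
  induction m using Nat.twoStepInduction with
  | zero => simp [Sz, show Finset.Icc 3 1 = ∅ by decide]; norm_num [J]
  | one => simp [Sz, show Finset.Icc 3 2 = ∅ by decide]; norm_num [J]
  | more m ih1 ih2 =>
    have hJ : (J (m + 4) : ℤ) = J (m + 3) + 2 * J (m + 2) := by
      rw [show m + 4 = (m + 2) + 2 from rfl, J]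
      push_cast
      ring
    have hJ2 : (J (m + 2) : ℤ) = J (m + 1) + 2 * J m := by
      rw [J]; push_cast; ring
    have := Sz_rec m
    rw [show m + 1 + 2 = m + 3 from rfl] at ih2
    push_cast at ih1 ih2 ⊢
    rw [show m + 2 + 2 = m + 4 from rfl, hJ]
    linarith

theorem stmt14 (n : ℕ) (hn : 0 < n) :
    J (n + 1) = n + J (n - 1) + ∑ k ∈ Finset.Icc 3 n, (2 * k - 5) * J (n + 1 - k) := by
  obtain ⟨m, rfl⟩ : ∃ m, n = m + 1 := ⟨n - 1, by omega⟩
  have hsum : ((∑ k ∈ Finset.Icc 3 (m + 1), (2 * k - 5) * J (m + 1 + 1 - k) : ℕ) : ℤ)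
      = Sz m := by
    rw [Nat.cast_sum, Sz]
    apply Finset.sum_congr rfl
    intro k hk
    simp only [Finset.mem_Icc] at hk
    have h5 : 5 ≤ 2 * k := by omega
    rw [Nat.cast_mul, Nat.cast_sub h5, show m + 1 + 1 - k = m + 2 - k from rfl]
    push_cast
    ring
  have h := Zmain m
  have : (J (m + 1 + 1) : ℤ) = ((m + 1 : ℕ) : ℤ) + J (m + 1 - 1)
      + ((∑ k ∈ Finset.Icc 3 (m + 1), (2 * k - 5) * J (m + 1 + 1 - k) : ℕ) : ℤ) := by
    rw [hsum, show m + 1 - 1 = m from rfl]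
    push_cast
    linarith
  exact_mod_cast this
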